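/- arXiv:1403.7587 — 2 statements merged into one kernel-verified Lean document; each statement's English description precedes it below -/
import Mathlib

section
/- Let G be a locally compact unimodular group with Haar measure μ acting on a set X, and let G act on W := X × ℝ by g • (x,t) := (g • x, t). Let ε > 0 and let α, β : ℝ → [0,1] satisfy α(t)² + β(t)² = 1 for all t and α(t) = 0 for all t ≤ ε/3. Let η : X → [0,∞) satisfy ∫_G η(g • x)² dμ(g) = 1 for every x, and let χ₁ : W → [0,∞) satisfy ∫_G χ₁(g • w)² dμ(g) = 1 for every w ∈ W; assume moreover that for each w = (x,t) the functions g ↦ χ₁(g • w)², g ↦ η(g • x)² and g ↦ χ₁(g • w)·η(g • x) are μ-integrable. Define χ₂(x,t) := α(t)·χ₁(x,t) + β(t)·η(x), ψ(x,t) := 2·α(t)·β(t)·χ₁(x,t)·η(x), and χ(w) := χ₂(w) / (1 + ∫_G ψ(g • w) dμ(g))^{1/2}. Then: (i) ∫_G χ(g • w)² dμ(g) = 1 for every w ∈ W, and (ii) χ(x,t) = η(x) whenever t ≤ ε/3. -/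
/-!
Expanding the square and using the normalizations of `χ₁` and `η` together with
`α² + β² = 1` gives `∫_G χ₂(g • w)² dμ(g) = 1 + ∫_G ψ(g • w) dμ(g)`, which is positive since
`ψ ≥ 0`. By right invariance of `μ` this orbit integral is constant along `G`-orbits, so dividing
`χ₂` by its square root yields a cutoff function. For `t ≤ ε/3` we have `α = 0`, `β = 1` and
`ψ = 0`, so `χ = η` there.
-/

open MeasureTheory

theorem integral_mul_add_mul_sq {Ω : Type*} [MeasurableSpace Ω] {ν : Measure Ω}
    {u v : Ω → ℝ} (hu : Integrable (fun ω => u ω ^ 2) ν)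
    (hv : Integrable (fun ω => v ω ^ 2) ν) (huv : Integrable (fun ω => u ω * v ω) ν)
    (a b : ℝ) :
    ∫ ω, (a * u ω + b * v ω) ^ 2 ∂ν
      = a ^ 2 * ∫ ω, u ω ^ 2 ∂ν + 2 * a * b * ∫ ω, u ω * v ω ∂ν
        + b ^ 2 * ∫ ω, v ω ^ 2 ∂ν := by
  have hexpand : (fun ω => (a * u ω + b * v ω) ^ 2)
      = fun ω => a ^ 2 * u ω ^ 2 + 2 * a * b * (u ω * v ω) + b ^ 2 * v ω ^ 2 := by
    funext ω; ring
  have hfirst : Integrable (fun ω => a ^ 2 * u ω ^ 2 + 2 * a * b * (u ω * v ω)) ν :=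
    (hu.const_mul _).add (huv.const_mul _)
  rw [hexpand, integral_add hfirst (hv.const_mul _),
    integral_add (hu.const_mul _) (huv.const_mul _), integral_const_mul,
    integral_const_mul, integral_const_mul]

section OrbitIntegral

variable {G X E : Type*} [Group G] [MeasurableSpace G] [MeasurableMul G]
  {μ : Measure G} [μ.IsMulRightInvariant] [MulAction G X]

theorem integral_comp_smul_smul [NormedAddCommGroup E] [NormedSpace ℝ E]
    (f : X → E) (g : G) (x : X) :
    ∫ h, f (h • g • x) ∂μ = ∫ h, f (h • x) ∂μ := by
  simp_rw [← mul_smul]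
  exact integral_mul_right_eq_self (fun h => f (h • x)) g

theorem integral_div_sqrt_orbit_integral_sq (φ : X → ℝ) (x : X)
    (hx : ∫ g, φ (g • x) ^ 2 ∂μ ≠ 0) :
    ∫ g, (φ (g • x) / √(∫ h, φ (h • g • x) ^ 2 ∂μ)) ^ 2 ∂μ = 1 := by
  have hN : 0 ≤ ∫ g, φ (g • x) ^ 2 ∂μ := integral_nonneg fun g => sq_nonneg _
  simp_rw [integral_comp_smul_smul (fun y => φ y ^ 2), div_pow, Real.sq_sqrt hN]
  rw [integral_div, div_self hx]

end OrbitIntegral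

theorem cutoff_extension_cobordism_general
    {G X : Type*} [Group G] [TopologicalSpace G] [IsTopologicalGroup G]
    [MeasurableSpace G] [BorelSpace G]
    (μ : Measure G) [μ.IsMulRightInvariant]
    [MulAction G X]
    (ε : ℝ)
    (α β : ℝ → ℝ)
    (hα01 : ∀ t, α t ∈ Set.Icc (0 : ℝ) 1)
    (hβ01 : ∀ t, β t ∈ Set.Icc (0 : ℝ) 1)
    (hαβ : ∀ t, (α t) ^ 2 + (β t) ^ 2 = 1)
    (hα0 : ∀ t ≤ ε / 3, α t = 0)
    (η : X → ℝ) (hη0 : ∀ x, 0 ≤ η x)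
    (hηnorm : ∀ x : X, ∫ g, (η (g • x)) ^ 2 ∂μ = 1)
    (χ₁ : X × ℝ → ℝ) (hχ₁0 : ∀ w, 0 ≤ χ₁ w)
    (hχ₁norm : ∀ (x : X) (t : ℝ), ∫ g, (χ₁ (g • x, t)) ^ 2 ∂μ = 1)
    (hint1 : ∀ (x : X) (t : ℝ), Integrable (fun g : G => (χ₁ (g • x, t)) ^ 2) μ)
    (hint2 : ∀ x : X, Integrable (fun g : G => (η (g • x)) ^ 2) μ)
    (hint3 : ∀ (x : X) (t : ℝ), Integrable (fun g : G => χ₁ (g • x, t) * η (g • x)) μ)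
    (χ₂ ψ χ : X × ℝ → ℝ)
    (hχ₂def : ∀ (x : X) (t : ℝ), χ₂ (x, t) = α t * χ₁ (x, t) + β t * η x)
    (hψdef : ∀ (x : X) (t : ℝ), ψ (x, t) = 2 * α t * β t * χ₁ (x, t) * η x)
    (hχdef : ∀ (x : X) (t : ℝ),
      χ (x, t) = χ₂ (x, t) / Real.sqrt (1 + ∫ g, ψ (g • x, t) ∂μ)) :
    (∀ (x : X) (t : ℝ), ∫ g, (χ (g • x, t)) ^ 2 ∂μ = 1) ∧
    (∀ (x : X) (t : ℝ), t ≤ ε / 3 → χ (x, t) = η x) := by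
  have hψ_nonneg : ∀ x t, 0 ≤ ∫ g, ψ (g • x, t) ∂μ := fun x t =>
    integral_nonneg fun g => by
      rw [hψdef]
      have := (hα01 t).1
      have := (hβ01 t).1
      have := hχ₁0 (g • x, t)
      have := hη0 (g • x)
      positivity
  have hχ₂_norm : ∀ x t, ∫ g, χ₂ (g • x, t) ^ 2 ∂μ = 1 + ∫ g, ψ (g • x, t) ∂μ := by
    intro x t
    simp_rw [hχ₂def, hψdef, mul_assoc (2 * α t * β t)]
    rw [integral_mul_add_mul_sq (hint1 x t) (hint2 x) (hint3 x t), integral_const_mul,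
      hχ₁norm, hηnorm]
    linear_combination hαβ t
  refine ⟨fun x t => ?_, fun x t ht => ?_⟩
  · have hχ : ∀ y, χ (y, t) = χ₂ (y, t) / √(∫ h, χ₂ (h • y, t) ^ 2 ∂μ) := fun y => by
      rw [hχdef, hχ₂_norm]
    simp only [hχ]
    exact integral_div_sqrt_orbit_integral_sq (fun y => χ₂ (y, t)) x
      (by rw [hχ₂_norm]; linarith [hψ_nonneg x t])
  · have hβ1 : β t = 1 := by
      nlinarith [hαβ t, hα0 t ht, (hβ01 t).1]
    simp [hχdef, hχ₂def, hψdef, hα0 t ht, hβ1]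

/-- A cutoff function `η` on `X` extends to a cutoff function `χ` on `W = X × ℝ`
(with `G` acting on the first factor) which equals `η` for `t ≤ ε/3`:
setting `χ₂(x,t) = α(t)χ₁(x,t) + β(t)η(x)`, `ψ(x,t) = 2α(t)β(t)χ₁(x,t)η(x)` and
`χ = χ₂ / (1 + ∫_G ψ(g•w) dμ(g))^{1/2}`, the function `χ` satisfies the normalization
`∫_G χ(g•w)² dμ(g) = 1` and `χ(x,t) = η(x)` for `t ≤ ε/3`. -/
theorem cutoff_extension_cobordism
    {G X : Type*} [Group G] [TopologicalSpace G] [IsTopologicalGroup G]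
    [LocallyCompactSpace G] [MeasurableSpace G] [BorelSpace G]
    (μ : Measure G) [μ.IsHaarMeasure] [μ.IsMulRightInvariant]
    [MulAction G X]
    (ε : ℝ) (hε : 0 < ε)
    (α β : ℝ → ℝ)
    (hα01 : ∀ t, α t ∈ Set.Icc (0 : ℝ) 1)
    (hβ01 : ∀ t, β t ∈ Set.Icc (0 : ℝ) 1)
    (hαβ : ∀ t, (α t) ^ 2 + (β t) ^ 2 = 1)
    (hα0 : ∀ t ≤ ε / 3, α t = 0)
    (η : X → ℝ) (hη0 : ∀ x, 0 ≤ η x)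
    (hηnorm : ∀ x : X, ∫ g, (η (g • x)) ^ 2 ∂μ = 1)
    (χ₁ : X × ℝ → ℝ) (hχ₁0 : ∀ w, 0 ≤ χ₁ w)
    (hχ₁norm : ∀ (x : X) (t : ℝ), ∫ g, (χ₁ (g • x, t)) ^ 2 ∂μ = 1)
    (hint1 : ∀ (x : X) (t : ℝ), Integrable (fun g : G => (χ₁ (g • x, t)) ^ 2) μ)
    (hint2 : ∀ x : X, Integrable (fun g : G => (η (g • x)) ^ 2) μ)
    (hint3 : ∀ (x : X) (t : ℝ), Integrable (fun g : G => χ₁ (g • x, t) * η (g • x)) μ)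
    (χ₂ ψ χ : X × ℝ → ℝ)
    (hχ₂def : ∀ (x : X) (t : ℝ), χ₂ (x, t) = α t * χ₁ (x, t) + β t * η x)
    (hψdef : ∀ (x : X) (t : ℝ), ψ (x, t) = 2 * α t * β t * χ₁ (x, t) * η x)
    (hχdef : ∀ (x : X) (t : ℝ),
      χ (x, t) = χ₂ (x, t) / Real.sqrt (1 + ∫ g, ψ (g • x, t) ∂μ)) :
    (∀ (x : X) (t : ℝ), ∫ g, (χ (g • x, t)) ^ 2 ∂μ = 1) ∧
    (∀ (x : X) (t : ℝ), t ≤ ε / 3 → χ (x, t) = η x) :=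
  cutoff_extension_cobordism_general μ ε α β hα01 hβ01 hαβ hα0 η hη0 hηnorm χ₁ hχ₁0 hχ₁norm hint1
    hint2 hint3 χ₂ ψ χ hχ₂def hψdef hχdef
end

section
/- Let G be a topological group acting continuously on a topological space X, and let G act on W := X × ℝ by g • (x,t) := (g • x, t). Assume every G-orbit in X is a closed subset of X. Let α, β : ℝ → ℝ, let η : X → ℝ and χ₁ : W → ℝ be continuous functions such that the closed support of χ₁ intersects every G-orbit in W in a compact set and the closed support of η intersects every G-orbit in X in a compact set. Then the closed support of the function χ₂(x,t) := α(t)·χ₁(x,t) + β(t)·η(x) intersects every G-orbit in W in a compact set. -/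
open Set

/- The support of `χ₂` lies in `tsupport χ₁ ∪ tsupport η × ℝ`, and a closed set inside a union of
two sets meeting a fixed set `k` compactly meets `k` compactly too. -/

theorem IsClosed.isCompact_inter_of_subset_union {Z : Type*} [TopologicalSpace Z] {s t u k : Set Z}
    (hs : IsClosed s) (hstu : s ⊆ t ∪ u) (ht : IsCompact (t ∩ k)) (hu : IsCompact (u ∩ k)) :
    IsCompact (s ∩ k) := by
  have hsk : s ∩ k = s ∩ (t ∩ k ∪ u ∩ k) := by
    rw [← union_inter_distrib_right, ← inter_assoc, inter_eq_left.mpr hstu]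
  rw [hsk]
  exact (ht.union hu).inter_left hs

theorem tsupport_mul_add_mul_comp_fst_subset {X T : Type*} [TopologicalSpace X]
    [TopologicalSpace T] (α β : T → ℝ) (χ : X × T → ℝ) (η : X → ℝ) :
    tsupport (fun p : X × T => α p.2 * χ p + β p.2 * η p.1) ⊆
      tsupport χ ∪ tsupport η ×ˢ univ :=
  (tsupport_add _ _).trans <| union_subset_union tsupport_mul_subset_right <|
    tsupport_mul_subset_right.trans <| by
      rw [prod_univ]
      exact tsupport_comp_subset_preimage η continuous_fst

theorem support_interpolation_orbit_compact_general
    {G X : Type*} [Group G]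
    [TopologicalSpace X] [MulAction G X]
    (α β : ℝ → ℝ) (η : X → ℝ) (χ₁ : X × ℝ → ℝ)
    (hχ₁supp : ∀ (x : X) (t : ℝ),
      IsCompact (tsupport χ₁ ∩ (MulAction.orbit G x ×ˢ ({t} : Set ℝ))))
    (hηsupp : ∀ x : X, IsCompact (tsupport η ∩ MulAction.orbit G x)) :
    ∀ (x : X) (t : ℝ),
      IsCompact (tsupport (fun p : X × ℝ => α p.2 * χ₁ p + β p.2 * η p.1) ∩
        (MulAction.orbit G x ×ˢ ({t} : Set ℝ))) := by
  intro x t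
  have hη : IsCompact (tsupport η ×ˢ univ ∩ MulAction.orbit G x ×ˢ ({t} : Set ℝ)) := by
    rw [prod_inter_prod, univ_inter]
    exact (hηsupp x).prod isCompact_singleton
  exact (isClosed_tsupport _).isCompact_inter_of_subset_union
    (tsupport_mul_add_mul_comp_fst_subset α β χ₁ η) (hχ₁supp x t) hη

/-- If the supports of `χ₁ : X × ℝ → ℝ` and `η : X → ℝ` intersect every `G`-orbit
(`G` acting on `X × ℝ` through the first factor) in a compact set, then so does the
support of `χ₂(x,t) = α(t)·χ₁(x,t) + β(t)·η(x)`. -/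
theorem support_interpolation_orbit_compact
    {G X : Type*} [Group G] [TopologicalSpace G] [IsTopologicalGroup G]
    [TopologicalSpace X] [MulAction G X] [ContinuousSMul G X]
    (horb : ∀ x : X, IsClosed (MulAction.orbit G x))
    (α β : ℝ → ℝ) (η : X → ℝ) (χ₁ : X × ℝ → ℝ)
    (hηcont : Continuous η) (hχ₁cont : Continuous χ₁)
    (hχ₁supp : ∀ (x : X) (t : ℝ),
      IsCompact (tsupport χ₁ ∩ (MulAction.orbit G x ×ˢ ({t} : Set ℝ))))
    (hηsupp : ∀ x : X, IsCompact (tsupport η ∩ MulAction.orbit G x)) :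
    ∀ (x : X) (t : ℝ),
      IsCompact (tsupport (fun p : X × ℝ => α p.2 * χ₁ p + β p.2 * η p.1) ∩
        (MulAction.orbit G x ×ˢ ({t} : Set ℝ))) :=
  support_interpolation_orbit_compact_general α β η χ₁ hχ₁supp hηsupp
end
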